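/- arXiv:1908.09889 — 2 statements merged into one kernel-verified Lean document; each statement's English description precedes it below -/
import Mathlib

section
/- For all integers n ≥ 1, m ≥ 0, k ≥ 1: Σ over all (k₀,...,k_m) of nonnegative integers with k₀+⋯+k_m = k of Π_{i=0}^m max((n+i)^{k_i - 1}, 1) ≤ 3^k·(m+1)·(n+m)^{k-1}. Here when k_i = 0 the factor max((n+i)^{-1},1) is interpreted as 1. -/
/-!
With `x = n + m`, every factor is at most `x ^ (kᵢ - 1)`, so the sum is at most
`W(m + 1, k)` where `W(p, k) = ∑ x ^ ∑ (kᵢ - 1)` over `p`-tuples summing to `k`. Splitting off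
the first coordinate gives `W(p + 1, k + 1) = W(p, k + 1) + ∑_{a + b = k} x ^ a W(p, b)`, and
induction on `p` yields `W(p, k + 1) ≤ 2 ^ k p x ^ k` as long as `p ≤ x`, which holds for
`p = m + 1` because `n ≥ 1`.
-/

open Finset

theorem Finset.Nat.sum_antidiagonalTuple_succ {M : Type*} [AddCommMonoid M] (p k : ℕ)
    (g : (Fin (p + 1) → ℕ) → M) :
    ∑ f ∈ Nat.antidiagonalTuple (p + 1) k, g f =
      ∑ ab ∈ antidiagonal k, ∑ t ∈ Nat.antidiagonalTuple p ab.2, g (Fin.cons ab.1 t) := by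
  simp only [Finset.sum, Nat.antidiagonalTuple, Multiset.Nat.antidiagonalTuple,
    List.Nat.antidiagonalTuple, HasAntidiagonal.antidiagonal, Multiset.Nat.antidiagonal]
  simp [List.flatMap, List.sum_flatten, Function.comp_def]

/-- The truncated exponent `f i - 1` vanishes at `f i = 0`, matching the convention that the factor
`max ((n + i) ^ (kᵢ - 1)) 1` is `1` when `kᵢ = 0`. -/
noncomputable def tupleWeight (x : ℝ) (p k : ℕ) : ℝ :=
  ∑ f ∈ Nat.antidiagonalTuple p k, x ^ ∑ i, (f i - 1)

theorem tupleWeight_zero_right (x : ℝ) (p : ℕ) : tupleWeight x p 0 = 1 := by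
  simp [tupleWeight, Nat.antidiagonalTuple_zero_right]

theorem tupleWeight_zero_succ (x : ℝ) (k : ℕ) : tupleWeight x 0 (k + 1) = 0 := by
  simp [tupleWeight, Nat.antidiagonalTuple_zero_succ]

theorem tupleWeight_succ_left (x : ℝ) (p k : ℕ) :
    tupleWeight x (p + 1) k = ∑ ab ∈ antidiagonal k, x ^ (ab.1 - 1) * tupleWeight x p ab.2 := by
  simp only [tupleWeight, Nat.sum_antidiagonalTuple_succ, mul_sum, ← pow_add, Fin.sum_univ_succ,
    Fin.cons_zero, Fin.cons_succ]

theorem tupleWeight_succ_succ (x : ℝ) (p k : ℕ) :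
    tupleWeight x (p + 1) (k + 1) =
      tupleWeight x p (k + 1) + ∑ ab ∈ antidiagonal k, x ^ ab.1 * tupleWeight x p ab.2 := by
  simp [tupleWeight_succ_left, Nat.sum_antidiagonal_succ]

theorem sum_antidiagonal_pow_mul_tupleWeight_le {x : ℝ} (hx : 0 ≤ x) {p : ℕ} :
    ∀ k, (∀ j < k, tupleWeight x p (j + 1) ≤ 2 ^ j * x ^ (j + 1)) →
      ∑ ab ∈ antidiagonal k, x ^ ab.1 * tupleWeight x p ab.2 ≤ 2 ^ k * x ^ k
  | 0, _ => by simp [tupleWeight_zero_right]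
  | k + 1, h => by
    have ih := sum_antidiagonal_pow_mul_tupleWeight_le hx k fun j hj => h j (by omega)
    calc ∑ ab ∈ antidiagonal (k + 1), x ^ ab.1 * tupleWeight x p ab.2
        = tupleWeight x p (k + 1) + x * ∑ ab ∈ antidiagonal k, x ^ ab.1 * tupleWeight x p ab.2 := by
          simp only [Nat.sum_antidiagonal_succ, pow_succ', mul_assoc, ← mul_sum, pow_zero, one_mul]
      _ ≤ 2 ^ k * x ^ (k + 1) + x * (2 ^ k * x ^ k) := by gcongr; exact h k (by omega)
      _ = 2 ^ (k + 1) * x ^ (k + 1) := by ring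

theorem tupleWeight_succ_le {x : ℝ} {p : ℕ} (hp : (p : ℝ) ≤ x) (k : ℕ) :
    tupleWeight x p (k + 1) ≤ 2 ^ k * p * x ^ k := by
  have hx : 0 ≤ x := p.cast_nonneg.trans hp
  induction p generalizing k with
  | zero => simp [tupleWeight_zero_succ]
  | succ p ih =>
    have hp' : (p : ℝ) ≤ x := by push_cast at hp; linarith
    have hbound : ∀ j < k, tupleWeight x p (j + 1) ≤ 2 ^ j * x ^ (j + 1) := fun j _ =>
      (ih hp' j).trans (by rw [pow_succ', mul_assoc]; gcongr)
    rw [tupleWeight_succ_succ]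
    push_cast
    linarith [ih hp' k, sum_antidiagonal_pow_mul_tupleWeight_le hx k hbound]

theorem max_pow_one_le_pow {x y : ℝ} (hx : 1 ≤ x) (hy₀ : 0 ≤ y) (hyx : y ≤ x) (e : ℕ) :
    max (y ^ e) 1 ≤ x ^ e :=
  max_le (pow_le_pow_left₀ hy₀ hyx e) (one_le_pow₀ hx)

theorem stmt_7_general (n m k : ℕ) (hn : 1 ≤ n) :
    ∑ f ∈ Finset.Nat.antidiagonalTuple (m + 1) k,
        ∏ i : Fin (m + 1), max (((n + (i : ℕ) : ℕ) : ℝ) ^ (f i - 1)) 1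
      ≤ 3 ^ k * ((m : ℝ) + 1) * ((n : ℝ) + (m : ℝ)) ^ (k - 1) := by
  set x : ℝ := n + m
  have hn' : (1 : ℝ) ≤ n := by exact_mod_cast hn
  have hmx : ((m + 1 : ℕ) : ℝ) ≤ x := by push_cast; linarith
  have hfactor : ∀ f : Fin (m + 1) → ℕ,
      ∏ i : Fin (m + 1), max (((n + (i : ℕ) : ℕ) : ℝ) ^ (f i - 1)) 1 ≤ x ^ ∑ i, (f i - 1) := by
    intro f
    rw [← prod_pow_eq_pow_sum]
    refine prod_le_prod (fun _ _ => by positivity) fun i _ => max_pow_one_le_pow ?_ ?_ ?_ _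
    · linarith [m.cast_nonneg (α := ℝ)]
    · positivity
    · have : (i : ℝ) ≤ m := by exact_mod_cast i.is_le
      push_cast
      linarith
  refine (sum_le_sum fun f _ => hfactor f).trans ?_
  change tupleWeight x (m + 1) k ≤ _
  cases k with
  | zero => simp [tupleWeight_zero_right]
  | succ k =>
    refine (tupleWeight_succ_le hmx k).trans ?_
    push_cast
    gcongr
    calc (2 : ℝ) ^ k ≤ 3 ^ k := pow_le_pow_left₀ (by norm_num) (by norm_num) k
      _ ≤ 3 ^ (k + 1) := pow_le_pow_right₀ (by norm_num) k.le_succ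

/-- For all integers `n ≥ 1`, `m ≥ 0`, `k ≥ 1`, the sum over all `(m+1)`-tuples
`(k₀,…,k_m)` of nonnegative integers with `k₀+⋯+k_m = k` of
`Π_{i=0}^m max((n+i)^{k_i-1}, 1)` is at most `3^k·(m+1)·(n+m)^{k-1}`
(the factor for `k_i = 0` being interpreted as `1`). -/
theorem stmt_7 (n m k : ℕ) (hn : 1 ≤ n) (hk : 1 ≤ k) :
    ∑ f ∈ Finset.Nat.antidiagonalTuple (m + 1) k,
        ∏ i : Fin (m + 1), max (((n + (i : ℕ) : ℕ) : ℝ) ^ (f i - 1)) 1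
      ≤ 3 ^ k * ((m : ℝ) + 1) * ((n : ℝ) + (m : ℝ)) ^ (k - 1) :=
  stmt_7_general n m k hn
end

section
/- Let X be a nonnegative random variable and c > 0, A ≥ 1 constants such that E[X^k] ≤ c^k·(k!)²·A for all integers k ≥ 0. Then E[exp(√X / (2√c))] ≤ 3A, and consequently P[X ≥ k] ≤ 3A·exp(-√k/(2√c)) for every k ≥ 1. -/
open MeasureTheory Real
open scoped ENNReal NNReal

lemma fact_sq_le (k : ℕ) : ((Nat.factorial k : ℝ)) ^ 2 ≤ (Nat.factorial (2 * k) : ℝ) := by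
  have h : Nat.factorial k * Nat.factorial k ≤ Nat.factorial (2 * k) := by
    have := Nat.factorial_mul_factorial_dvd_factorial_add k k
    rw [show k + k = 2 * k by ring] at this
    exact Nat.le_of_dvd (Nat.factorial_pos _) this
  rw [sq]
  exact_mod_cast h

/-- Let `X` be a nonnegative random variable and `c > 0`, `A ≥ 1` constants with
`E[X^k] ≤ c^k·(k!)²·A` for all `k ≥ 0`. Then `E[exp(√X/(2√c))] ≤ 3A`, and consequently
`P[X ≥ k] ≤ 3A·exp(-√k/(2√c))` for every `k ≥ 1`. -/
theorem stmt_12 {Ω : Type*} [MeasurableSpace Ω] (μ : Measure Ω) [IsProbabilityMeasure μ]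
    (X : Ω → ℝ) (hX : Measurable X) (hX0 : ∀ ω, 0 ≤ X ω)
    (c A : ℝ) (hc : 0 < c) (hA : 1 ≤ A)
    (hmom : ∀ k : ℕ, ∫⁻ ω, ENNReal.ofReal ((X ω) ^ k) ∂μ ≤
      ENNReal.ofReal (c ^ k * (Nat.factorial k : ℝ) ^ 2 * A)) :
    (∫⁻ ω, ENNReal.ofReal (Real.exp (Real.sqrt (X ω) / (2 * Real.sqrt c))) ∂μ ≤
        ENNReal.ofReal (3 * A)) ∧
      ∀ k : ℕ, 1 ≤ k →
        μ {ω | (k : ℝ) ≤ X ω} ≤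
          ENNReal.ofReal (3 * A * Real.exp (-Real.sqrt (k : ℝ) / (2 * Real.sqrt c))) := by
  have hsc : 0 < Real.sqrt c := Real.sqrt_pos.2 hc
  have hA0 : 0 < A := lt_of_lt_of_le one_pos hA
  -- coefficient r k
  set r : ℕ → ℝ := fun k => ((4 * c) ^ k * (Nat.factorial (2 * k) : ℝ))⁻¹ with hr
  have hr0 : ∀ k, 0 < r k := fun k => by
    have : (0:ℝ) < (4 * c) ^ k * (Nat.factorial (2 * k) : ℝ) := by positivity
    exact inv_pos.2 this
  -- pointwise: exp(√x/(2√c)) ≤ 2 * ∑' k, x^k * r k  for x ≥ 0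
  have hpt : ∀ x : ℝ, 0 ≤ x →
      Real.exp (Real.sqrt x / (2 * Real.sqrt c)) ≤ 2 * ∑' k : ℕ, x ^ k * r k := by
    intro x hx
    set a := Real.sqrt x / (2 * Real.sqrt c) with ha
    have ha0 : 0 ≤ a := by positivity
    have hterm : ∀ k : ℕ, a ^ (2 * k) / (Nat.factorial (2 * k) : ℝ) = x ^ k * r k := by
      intro k
      have h1 : a ^ (2 * k) = x ^ k / (4 * c) ^ k := by
        rw [ha, div_pow, pow_mul, pow_mul, Real.sq_sqrt hx]
        congr 1
        rw [mul_pow, Real.sq_sqrt hc.le]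
        ring
      rw [h1, hr]
      field_simp
    have hcosh : Real.exp a ≤ 2 * Real.cosh a := by
      rw [Real.cosh_eq]
      have := (Real.exp_pos (-a)).le
      linarith
    calc Real.exp a ≤ 2 * Real.cosh a := hcosh
      _ = 2 * ∑' k : ℕ, x ^ k * r k := by
          rw [Real.cosh_eq_tsum]
          congr 1
          exact tsum_congr hterm
  -- summability
  have hsumm : ∀ x : ℝ, 0 ≤ x → Summable (fun k : ℕ => x ^ k * r k) := by
    intro x hx
    have := (Real.hasSum_cosh (Real.sqrt x / (2 * Real.sqrt c))).summable
    refine this.congr fun k => ?_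
    have ha0 : (0:ℝ) ≤ Real.sqrt x / (2 * Real.sqrt c) := by positivity
    have h1 : (Real.sqrt x / (2 * Real.sqrt c)) ^ (2 * k) = x ^ k / (4 * c) ^ k := by
      rw [div_pow, pow_mul, pow_mul, Real.sq_sqrt hx]
      congr 1
      rw [mul_pow, Real.sq_sqrt hc.le]
      ring
    rw [h1, hr]
    field_simp
  -- main integral bound
  have hmain : ∫⁻ ω, ENNReal.ofReal (Real.exp (Real.sqrt (X ω) / (2 * Real.sqrt c))) ∂μ ≤
      ENNReal.ofReal (3 * A) := by
    have step1 : ∫⁻ ω, ENNReal.ofReal (Real.exp (Real.sqrt (X ω) / (2 * Real.sqrt c))) ∂μ ≤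
        ∫⁻ ω, 2 * ∑' k : ℕ, ENNReal.ofReal ((X ω) ^ k) * ENNReal.ofReal (r k) ∂μ := by
      refine lintegral_mono fun ω => ?_
      have h := hpt (X ω) (hX0 ω)
      calc ENNReal.ofReal (Real.exp (Real.sqrt (X ω) / (2 * Real.sqrt c)))
          ≤ ENNReal.ofReal (2 * ∑' k : ℕ, (X ω) ^ k * r k) := ENNReal.ofReal_le_ofReal h
        _ = 2 * ENNReal.ofReal (∑' k : ℕ, (X ω) ^ k * r k) := by
            rw [ENNReal.ofReal_mul (by norm_num)]
            norm_num
        _ = 2 * ∑' k : ℕ, ENNReal.ofReal ((X ω) ^ k * r k) := by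
            rw [ENNReal.ofReal_tsum_of_nonneg
              (fun k => mul_nonneg (pow_nonneg (hX0 ω) k) (hr0 k).le)
              (hsumm (X ω) (hX0 ω))]
        _ = 2 * ∑' k : ℕ, ENNReal.ofReal ((X ω) ^ k) * ENNReal.ofReal (r k) := by
            congr 1
            exact tsum_congr fun k => ENNReal.ofReal_mul (pow_nonneg (hX0 ω) k)
    have step2 : ∫⁻ ω, 2 * ∑' k : ℕ, ENNReal.ofReal ((X ω) ^ k) * ENNReal.ofReal (r k) ∂μ =
        2 * ∑' k : ℕ, (∫⁻ ω, ENNReal.ofReal ((X ω) ^ k) ∂μ) * ENNReal.ofReal (r k) := by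
      rw [lintegral_const_mul]
      · congr 1
        rw [lintegral_tsum]
        · exact tsum_congr fun k => by
            rw [lintegral_mul_const]
            exact (ENNReal.measurable_ofReal.comp (hX.pow_const k))
        · intro k
          exact ((ENNReal.measurable_ofReal.comp (hX.pow_const k)).mul_const _).aemeasurable
      · exact Measurable.ennreal_tsum fun k =>
          (ENNReal.measurable_ofReal.comp (hX.pow_const k)).mul_const _
    have step3 : (2 : ℝ≥0∞) * ∑' k : ℕ, (∫⁻ ω, ENNReal.ofReal ((X ω) ^ k) ∂μ) *
        ENNReal.ofReal (r k) ≤ 2 * ∑' k : ℕ, ENNReal.ofReal (A * (1/4) ^ k) := by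
      refine mul_le_mul_right (ENNReal.tsum_le_tsum fun k => ?_) 2
      calc (∫⁻ ω, ENNReal.ofReal ((X ω) ^ k) ∂μ) * ENNReal.ofReal (r k)
          ≤ ENNReal.ofReal (c ^ k * (Nat.factorial k : ℝ) ^ 2 * A) * ENNReal.ofReal (r k) :=
            mul_le_mul_left (hmom k) _
        _ = ENNReal.ofReal (c ^ k * (Nat.factorial k : ℝ) ^ 2 * A * r k) :=
            (ENNReal.ofReal_mul (by positivity)).symm
        _ ≤ ENNReal.ofReal (A * (1/4) ^ k) := by
            refine ENNReal.ofReal_le_ofReal ?_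
            rw [hr]
            simp only []
            have hfk := fact_sq_le k
            have h2k : (0:ℝ) < (Nat.factorial (2 * k) : ℝ) := by positivity
            have h4c : (0:ℝ) < (4 * c) ^ k := by positivity
            have key : c ^ k * (Nat.factorial k : ℝ) ^ 2 * A *
                ((4 * c) ^ k * (Nat.factorial (2 * k) : ℝ))⁻¹ ≤
                c ^ k * (Nat.factorial (2 * k) : ℝ) * A *
                ((4 * c) ^ k * (Nat.factorial (2 * k) : ℝ))⁻¹ := by
              gcongr
            refine key.trans (le_of_eq ?_)
            rw [mul_pow]
            field_simp
            ring_nf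
            rw [← mul_pow]; norm_num
    have step4 : (2 : ℝ≥0∞) * ∑' k : ℕ, ENNReal.ofReal (A * (1/4) ^ k) ≤
        ENNReal.ofReal (3 * A) := by
      have hgsum : Summable (fun k : ℕ => A * (1/4 : ℝ) ^ k) :=
        (summable_geometric_of_lt_one (by norm_num) (by norm_num)).mul_left A
      rw [← ENNReal.ofReal_tsum_of_nonneg (fun k => by positivity) hgsum,
        show (2 : ℝ≥0∞) = ENNReal.ofReal 2 by norm_num,
        ← ENNReal.ofReal_mul (by norm_num)]
      refine ENNReal.ofReal_le_ofReal ?_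
      rw [tsum_mul_left, tsum_geometric_of_lt_one (by norm_num) (by norm_num)]
      nlinarith
    calc ∫⁻ ω, ENNReal.ofReal (Real.exp (Real.sqrt (X ω) / (2 * Real.sqrt c))) ∂μ
        ≤ ∫⁻ ω, 2 * ∑' k : ℕ, ENNReal.ofReal ((X ω) ^ k) * ENNReal.ofReal (r k) ∂μ := step1
      _ = 2 * ∑' k : ℕ, (∫⁻ ω, ENNReal.ofReal ((X ω) ^ k) ∂μ) * ENNReal.ofReal (r k) := step2
      _ ≤ 2 * ∑' k : ℕ, ENNReal.ofReal (A * (1/4) ^ k) := step3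
      _ ≤ ENNReal.ofReal (3 * A) := step4
  refine ⟨hmain, fun k hk => ?_⟩
  set b := Real.sqrt (k : ℝ) / (2 * Real.sqrt c) with hb
  have hbexp : 0 < Real.exp b := Real.exp_pos b
  have hsubset : {ω | (k : ℝ) ≤ X ω} ⊆
      {ω | ENNReal.ofReal (Real.exp b) ≤
        ENNReal.ofReal (Real.exp (Real.sqrt (X ω) / (2 * Real.sqrt c)))} := by
    intro ω hω
    refine ENNReal.ofReal_le_ofReal (Real.exp_le_exp.2 ?_)
    exact div_le_div_of_nonneg_right (Real.sqrt_le_sqrt hω) (by positivity)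
  have hmarkov := MeasureTheory.meas_ge_le_lintegral_div
    (f := fun ω => ENNReal.ofReal (Real.exp (Real.sqrt (X ω) / (2 * Real.sqrt c))))
    (μ := μ)
    (Measurable.aemeasurable (by
      exact ENNReal.measurable_ofReal.comp (Real.measurable_exp.comp
        ((Real.continuous_sqrt.measurable.comp hX).div_const _))))
    (ε := ENNReal.ofReal (Real.exp b))
    (by simp [ENNReal.ofReal_eq_zero, not_le, hbexp]) ENNReal.ofReal_ne_top
  calc μ {ω | (k : ℝ) ≤ X ω} ≤ μ {ω | ENNReal.ofReal (Real.exp b) ≤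
        ENNReal.ofReal (Real.exp (Real.sqrt (X ω) / (2 * Real.sqrt c)))} :=
        measure_mono hsubset
    _ ≤ (∫⁻ ω, ENNReal.ofReal (Real.exp (Real.sqrt (X ω) / (2 * Real.sqrt c))) ∂μ) /
        ENNReal.ofReal (Real.exp b) := hmarkov
    _ ≤ ENNReal.ofReal (3 * A) / ENNReal.ofReal (Real.exp b) :=
        ENNReal.div_le_div_right hmain _
    _ = ENNReal.ofReal (3 * A * Real.exp (-Real.sqrt (k : ℝ) / (2 * Real.sqrt c))) := by
        rw [← ENNReal.ofReal_div_of_pos hbexp]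
        congr 1
        rw [show -Real.sqrt (k : ℝ) / (2 * Real.sqrt c) = -b by rw [hb]; ring,
          Real.exp_neg, div_eq_mul_inv]
end
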